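/- Let G = (V, E) be a finite graph with n vertices and m edges, M = m + 1, and L(β) = M·Σ_j(|β_j|_2 + |β_j − 1|_2) + Σ_{(u,v)∈E}|β_u + β_v − 1|_2 for β : V → ℚ. For any integer K, G has a cut of size at least K if and only if there exists β : V → ℚ with L(β) ≤ M·n + m − K. -/

import Mathlib

/-!
Each vertex term `|q|₂ + |q - 1|₂` is at least `1`, with equality at `q ∈ {0, 1}`, and exceeds `2`
once `|q|₂ > 1`. Since `M = m + 1` outweighs all edge terms together, a loss `≤ M n + m - K`
with `K ≥ 0` forces every `β j` into `ℤ₂`, where it has a parity. Two endpoints of equal parity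
make `β u + β v - 1` odd, so that edge costs exactly `1`: the parity cut leaves at most
`L(β) - M n` edges uncut. Conversely, the `{0, 1}`-indicator of a cut has loss
`M n + m - cutsize`.
-/
open Finset

namespace padicNorm

variable {p : ℕ} [Fact p.Prime]

theorem add_eq_right_of_lt {q r : ℚ} (h : padicNorm p q < padicNorm p r) :
    padicNorm p (q + r) = padicNorm p r := by
  rw [add_eq_max_of_ne h.ne, max_eq_right h.le]

theorem one_le_add_sub_one (q : ℚ) : 1 ≤ padicNorm p q + padicNorm p (q - 1) := by
  have h : padicNorm p (q - (q - 1)) ≤ max (padicNorm p q) (padicNorm p (q - 1)) := padicNorm.sub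
  rw [sub_sub_cancel, padicNorm.one] at h
  exact h.trans (max_le_add_of_nonneg (padicNorm.nonneg _) (padicNorm.nonneg _))

theorem sub_one_eq_of_one_lt {q : ℚ} (h : 1 < padicNorm p q) :
    padicNorm p (q - 1) = padicNorm p q := by
  rw [sub_eq_add_neg, add_comm, add_eq_right_of_lt (by rwa [padicNorm.neg, padicNorm.one])]

theorem exists_sub_intCast_lt_one {q : ℚ} (h : padicNorm p q ≤ 1) :
    ∃ n : ℤ, 0 ≤ n ∧ n < p ∧ padicNorm p (q - n) < 1 := by
  have hq : ‖(q : ℚ_[p])‖ ≤ 1 := by rw [Padic.eq_padicNorm]; exact_mod_cast h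
  obtain ⟨n, hn0, hnp, hn⟩ := PadicInt.exists_mem_range_of_norm_rat_le_one q hq
  refine ⟨n, hn0, hnp, ?_⟩
  have : ‖((q - n : ℚ) : ℚ_[p])‖ < 1 := by
    convert hn using 2
    push_cast
    rfl
  rw [Padic.eq_padicNorm] at this
  exact_mod_cast this

theorem two_lt_one_or_sub_one_lt_one {q : ℚ} (h : padicNorm 2 q ≤ 1) :
    padicNorm 2 q < 1 ∨ padicNorm 2 (q - 1) < 1 := by
  obtain ⟨n, hn0, hn2, hn⟩ := exists_sub_intCast_lt_one h
  interval_cases n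
  · left; simpa using hn
  · right; simpa using hn

theorem two_add_sub_one_eq_one {a b : ℚ} (c : ℤ) (ha : padicNorm 2 (a - c) < 1)
    (hb : padicNorm 2 (b - c) < 1) : padicNorm 2 (a + b - 1) = 1 := by
  have hodd : padicNorm 2 ((2 * c - 1 : ℤ) : ℚ) = 1 := (int_eq_one_iff _).mpr (by omega)
  have hsum : padicNorm 2 ((a - c) + (b - c)) < 1 :=
    padicNorm.nonarchimedean.trans_lt (max_lt ha hb)
  rw [show a + b - 1 = (a - c) + (b - c) + ((2 * c - 1 : ℤ) : ℚ) by push_cast; ring,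
    add_eq_right_of_lt (hodd ▸ hsum), hodd]

theorem two_add_sub_one_eq_one_of_iff {a b : ℚ} (ha : padicNorm 2 a ≤ 1)
    (hb : padicNorm 2 b ≤ 1) (hab : padicNorm 2 (a - 1) < 1 ↔ padicNorm 2 (b - 1) < 1) :
    padicNorm 2 (a + b - 1) = 1 := by
  by_cases ha1 : padicNorm 2 (a - 1) < 1
  · exact two_add_sub_one_eq_one 1 (by simpa using ha1) (by simpa using hab.mp ha1)
  · have hb1 : ¬ padicNorm 2 (b - 1) < 1 := hab.not.mp ha1
    exact two_add_sub_one_eq_one 0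
      (by simpa using (two_lt_one_or_sub_one_lt_one ha).resolve_right ha1)
      (by simpa using (two_lt_one_or_sub_one_lt_one hb).resolve_right hb1)

end padicNorm

namespace MaxCut

variable {V : Type} (E : Finset (V × V))

def cutSize (s : V → Bool) : ℕ := #(E.filter fun e => s e.1 ≠ s e.2)

def vertexLoss [Fintype V] (β : V → ℚ) : ℚ := ∑ j, (padicNorm 2 (β j) + padicNorm 2 (β j - 1))

def edgeLoss (β : V → ℚ) : ℚ := ∑ e ∈ E, padicNorm 2 (β e.1 + β e.2 - 1)

/-- The residue of `β j` in `𝔽₂`, meaningful when `|β j|₂ ≤ 1`. -/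
def roundParity (β : V → ℚ) (j : V) : Bool := decide (padicNorm 2 (β j - 1) < 1)

theorem cutSize_add_card_filter_eq (s : V → Bool) :
    cutSize E s + #(E.filter fun e => s e.1 = s e.2) = #E := by
  rw [cutSize]
  simpa only [not_not] using card_filter_add_card_filter_not (s := E) fun e => s e.1 ≠ s e.2

theorem vertexLoss_toNat [Fintype V] (s : V → Bool) :
    vertexLoss (fun j => ((s j).toNat : ℚ)) = Fintype.card V := by
  have h : ∀ b : Bool, padicNorm 2 (b.toNat : ℚ) + padicNorm 2 ((b.toNat : ℚ) - 1) = 1 := by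
    rintro (_ | _) <;> norm_num
  simp [vertexLoss, h]

theorem edgeLoss_toNat_add_cutSize (s : V → Bool) :
    edgeLoss E (fun j => ((s j).toNat : ℚ)) + cutSize E s = #E := by
  have h : ∀ b c : Bool,
      padicNorm 2 ((b.toNat : ℚ) + c.toNat - 1) = if b = c then 1 else 0 := by
    rintro (_ | _) (_ | _) <;> norm_num
  rw [edgeLoss, sum_congr rfl fun e _ => h (s e.1) (s e.2), sum_boole, add_comm]
  exact_mod_cast cutSize_add_card_filter_eq E s

theorem card_le_vertexLoss [Fintype V] (β : V → ℚ) : (Fintype.card V : ℚ) ≤ vertexLoss β := by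
  calc (Fintype.card V : ℚ) = ∑ _j : V, (1 : ℚ) := by simp
    _ ≤ vertexLoss β := sum_le_sum fun j _ => padicNorm.one_le_add_sub_one (β j)

theorem card_add_one_lt_vertexLoss [Fintype V] {β : V → ℚ} (h : ∃ j, 1 < padicNorm 2 (β j)) :
    (Fintype.card V : ℚ) + 1 < vertexLoss β := by
  classical
  obtain ⟨i, hi⟩ := h
  have hlt : ∑ j, (1 + if j = i then 1 else 0 : ℚ) < vertexLoss β := by
    refine sum_lt_sum (fun j _ => ?_) ⟨i, mem_univ i, ?_⟩
    · split_ifs with hj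
      · subst hj; rw [padicNorm.sub_one_eq_of_one_lt hi]; linarith
      · simpa using padicNorm.one_le_add_sub_one (p := 2) (β j)
    · rw [if_pos rfl, padicNorm.sub_one_eq_of_one_lt hi]; linarith
  simpa [sum_add_distrib] using hlt

theorem card_sub_cutSize_le_edgeLoss {β : V → ℚ} (h : ∀ j, padicNorm 2 (β j) ≤ 1) :
    (#E : ℚ) - cutSize E (roundParity β) ≤ edgeLoss E β := by
  have hsame : (#E : ℚ) - cutSize E (roundParity β) =
      ∑ e ∈ E, if roundParity β e.1 = roundParity β e.2 then 1 else 0 := by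
    rw [sum_boole, ← cutSize_add_card_filter_eq E]
    push_cast
    ring
  rw [hsame, edgeLoss]
  refine sum_le_sum fun e _ => ?_
  split_ifs with he
  · refine (padicNorm.two_add_sub_one_eq_one_of_iff (h e.1) (h e.2) ?_).ge
    simpa [roundParity] using he
  · exact padicNorm.nonneg _

theorem edgeLoss_nonneg (β : V → ℚ) : 0 ≤ edgeLoss E β :=
  sum_nonneg fun _ _ => padicNorm.nonneg _

end MaxCut

open MaxCut in
theorem stmt_11_general (V : Type) [Fintype V] (E : Finset (V × V))
    (M : ℝ) (hM : M = E.card + 1)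
    (L : (V → ℚ) → ℝ)
    (hL : ∀ β, L β =
      M * ∑ j : V, (((padicNorm 2 (β j) : ℚ) : ℝ) + ((padicNorm 2 (β j - 1) : ℚ) : ℝ)) +
        ∑ e ∈ E, ((padicNorm 2 (β e.1 + β e.2 - 1) : ℚ) : ℝ))
    (K : ℤ) :
    (∃ s : V → Bool, (K : ℝ) ≤ (E.filter (fun e => s e.1 ≠ s e.2)).card) ↔
    (∃ β : V → ℚ, L β ≤ M * (Fintype.card V) + E.card - K) := by
  have hL' : ∀ β, L β = M * vertexLoss β + edgeLoss E β := fun β => by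
    simp [hL, vertexLoss, edgeLoss]
  have hM0 : 0 ≤ M := by rw [hM]; positivity
  constructor
  · rintro ⟨s, hs⟩
    refine ⟨fun j => (s j).toNat, ?_⟩
    have hcut : (edgeLoss E (fun j => ((s j).toNat : ℚ)) : ℝ) + cutSize E s = E.card := by
      exact_mod_cast edgeLoss_toNat_add_cutSize E s
    rw [hL', vertexLoss_toNat]
    change (K : ℝ) ≤ cutSize E s at hs
    push_cast
    linarith
  · rintro ⟨β, hβ⟩
    rw [hL'] at hβ
    by_cases hβ1 : ∀ j, padicNorm 2 (β j) ≤ 1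
    · refine ⟨roundParity β, ?_⟩
      have hV : (Fintype.card V : ℝ) ≤ vertexLoss β := by exact_mod_cast card_le_vertexLoss β
      have hE : (E.card : ℝ) - cutSize E (roundParity β) ≤ edgeLoss E β := by
        exact_mod_cast card_sub_cutSize_le_edgeLoss E hβ1
      have := mul_le_mul_of_nonneg_left hV hM0
      change (K : ℝ) ≤ cutSize E (roundParity β)
      linarith
    · push Not at hβ1
      have hV : (Fintype.card V : ℝ) + 1 < vertexLoss β := by
        exact_mod_cast card_add_one_lt_vertexLoss hβ1
      have hE : (0 : ℝ) ≤ edgeLoss E β := by exact_mod_cast edgeLoss_nonneg E β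
      have := mul_le_mul_of_nonneg_left hV.le hM0
      refine ⟨fun _ => true, le_trans ?_ (Nat.cast_nonneg _)⟩
      linarith

theorem stmt_11 (V : Type) [Fintype V] [DecidableEq V] (E : Finset (V × V))
    (M : ℝ) (hM : M = E.card + 1)
    (L : (V → ℚ) → ℝ)
    (hL : ∀ β, L β =
      M * ∑ j : V, (((padicNorm 2 (β j) : ℚ) : ℝ) + ((padicNorm 2 (β j - 1) : ℚ) : ℝ)) +
        ∑ e ∈ E, ((padicNorm 2 (β e.1 + β e.2 - 1) : ℚ) : ℝ))
    (K : ℤ) :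
    (∃ s : V → Bool, (K : ℝ) ≤ (E.filter (fun e => s e.1 ≠ s e.2)).card) ↔
    (∃ β : V → ℚ, L β ≤ M * (Fintype.card V) + E.card - K) :=
  stmt_11_general V E M hM L hL K
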